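/- Let V be a finite set, (K_i)_{i≥1} a sequence of Markov kernels on V, μ_0 a positive probability measure with all μ_n = μ_0K_1⋯K_n positive. For each i let K_i^* be the adjoint of K_i : ℓ²(μ_i) → ℓ²(μ_{i−1}), let P_i = K_i^*K_i (reversible with respect to μ_i), and let l(P_i) be its logarithmic Sobolev constant. Then for every n ≥ 1, every q_0 ≥ 2, and every q with q_0 ≤ q ≤ (∏_{i=1}^n (1+l(P_i)))·q_0, one has ‖K_{0,n}‖_{ℓ^{q_0}(μ_n)→ℓ^q(μ_0)} ≤ 1. -/

import Mathlib

open Finset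

noncomputable section

namespace TimeInhomog

variable {V : Type*} [Fintype V] [DecidableEq V]

/-- A (row-stochastic) Markov kernel on a finite set `V`. -/
def IsKernel (K : V → V → ℝ) : Prop :=
  (∀ x y, 0 ≤ K x y) ∧ ∀ x, ∑ y, K x y = 1

/-- Action of a kernel on a measure: `(μK)(y) = ∑ₓ μ(x) K(x,y)`. -/
def mulMK (μ : V → ℝ) (K : V → V → ℝ) : V → ℝ :=
  fun y => ∑ x, μ x * K x y

/-- Action of a kernel on a function: `(Kf)(x) = ∑_y K(x,y) f(y)`. -/
def mulKF (K : V → V → ℝ) (f : V → ℝ) : V → ℝ :=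
  fun x => ∑ y, K x y * f y

/-- Product of two kernels (matrix product). -/
def mulKK (K L : V → V → ℝ) : V → V → ℝ :=
  fun x y => ∑ z, K x z * L z y

/-- The identity kernel. -/
def idK : V → V → ℝ :=
  fun x y => if x = y then 1 else 0

/-- `muSeq μ0 K n = μ_n = μ0 K_1 K_2 ⋯ K_n`. -/
def muSeq (μ0 : V → ℝ) (K : ℕ → V → V → ℝ) : ℕ → V → ℝ
  | 0 => μ0
  | n + 1 => mulMK (muSeq μ0 K n) (K (n + 1))

/-- `Kseg K m n = K_{m,n} = K_{m+1} K_{m+2} ⋯ K_n` (identity if `n ≤ m`). -/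
def Kseg (K : ℕ → V → V → ℝ) (m : ℕ) : ℕ → V → V → ℝ
  | 0 => idK
  | n + 1 => if n + 1 ≤ m then idK else mulKK (Kseg K m n) (K (n + 1))

/-- `‖f‖_{ℓ^p(ν)} = (∑ₓ |f(x)|^p ν(x))^{1/p}` for a real exponent `p`. -/
def lpNorm (ν : V → ℝ) (p : ℝ) (f : V → ℝ) : ℝ :=
  (∑ x, |f x| ^ p * ν x) ^ (1 / p)

/-- `‖f‖_{ℓ^∞} = maxₓ |f(x)|`. -/
def linftyNorm (f : V → ℝ) : ℝ := ⨆ x, |f x|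

/-- Operator "norm" of `A` with respect to an input norm and an output norm. -/
def opNorm (nIn nOut : (V → ℝ) → ℝ) (A : (V → ℝ) → V → ℝ) : ℝ :=
  sSup {r : ℝ | ∃ f : V → ℝ, nIn f ≤ 1 ∧ r = nOut (A f)}

/-- The second largest singular value of `K : ℓ²(νin) → ℓ²(νout)`,
i.e. the norm of `K - νin : ℓ²(νin) → ℓ²(νout)` where the measure `νin`
is identified with the operator `f ↦ νin(f)𝟙`. -/
def sigma1 (Kk : V → V → ℝ) (νin νout : V → ℝ) : ℝ :=
  opNorm (lpNorm νin 2) (lpNorm νout 2)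
    (fun f x => mulKF Kk f x - ∑ z, νin z * f z)

/-- Dirichlet form of a kernel `P` reversible with respect to `ν`. -/
def dirichlet (P : V → V → ℝ) (ν : V → ℝ) (f : V → ℝ) : ℝ :=
  (1 / 2) * ∑ x, ∑ y, (f x - f y) ^ 2 * (ν x * P x y)

/-- The kernel of `K*K` where `K : ℓ²(μcur) → ℓ²(μprev)`,
`P(x,y) = (1/μcur(x)) ∑_z μprev(z) K(z,x) K(z,y)`. -/
def Pker (Kk : V → V → ℝ) (μprev μcur : V → ℝ) : V → V → ℝ :=
  fun x y => (1 / μcur x) * ∑ z, μprev z * Kk z x * Kk z y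

/-- The kernel of the adjoint `K*` of `K : ℓ²(μcur) → ℓ²(μprev)`,
`K*(x,y) = K(y,x) μprev(y) / μcur(x)`. -/
def adjK (Kk : V → V → ℝ) (μprev μcur : V → ℝ) : V → V → ℝ :=
  fun x y => Kk y x * μprev y / μcur x

/-- The `ℓ²(ν)` relative entropy `L(f²,ν)`. -/
def entL (ν : V → ℝ) (f : V → ℝ) : ℝ :=
  ∑ x, f x ^ 2 * Real.log (f x ^ 2 / ∑ y, f y ^ 2 * ν y) * ν x

/-- The logarithmic Sobolev constant of a kernel `P` with respect to `ν`. -/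
def lsConst (P : V → V → ℝ) (ν : V → ℝ) : ℝ :=
  sInf {r : ℝ | ∃ f : V → ℝ, entL ν f ≠ 0 ∧ r = dirichlet P ν f / entL ν f}

/-- Chi-square type distance `d₂(κ,ν)`. -/
def d2 (κ ν : V → ℝ) : ℝ :=
  (∑ y, |κ y / ν y - 1| ^ 2 * ν y) ^ ((1 : ℝ) / 2)

/-- `c`-stability of a sequence of kernels with respect to `μ0`. -/
def cStable (c : ℝ) (μ0 : V → ℝ) (K : ℕ → V → V → ℝ) : Prop :=
  ∀ n x, c⁻¹ ≤ muSeq μ0 K n x / μ0 x ∧ muSeq μ0 K n x / μ0 x ≤ c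

/-- Powers of a kernel. -/
def kpow (Kk : V → V → ℝ) : ℕ → V → V → ℝ
  | 0 => idK
  | n + 1 => mulKK (kpow Kk n) Kk

/-- Irreducibility of a Markov kernel. -/
def IsIrreducible (Kk : V → V → ℝ) : Prop :=
  ∀ x y, ∃ n, 0 < kpow Kk n x y

/-- Aperiodicity of a Markov kernel. -/
def IsAperiodic (Kk : V → V → ℝ) : Prop :=
  ∀ x, ∃ N0 : ℕ, ∀ n, N0 ≤ n → 0 < kpow Kk n x x


section AuxProofs

variable {V : Type*} [Fintype V] [DecidableEq V]

private lemma MlogM_le_one {M : ℝ} (hM : 0 ≤ M) : M - M * Real.log M ≤ 1 := by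
  rcases eq_or_lt_of_le hM with h | h
  · simp [← h]
  · have h1 : Real.log M⁻¹ ≤ M⁻¹ - 1 := Real.log_le_sub_one_of_pos (inv_pos.2 h)
    rw [Real.log_inv] at h1
    have h2 : 1 - Real.log M ≤ M⁻¹ := by linarith
    have h3 := mul_le_mul_of_nonneg_left h2 h.le
    calc M - M * Real.log M = M * (1 - Real.log M) := by ring
    _ ≤ M * M⁻¹ := h3
    _ = 1 := mul_inv_cancel₀ h.ne'

private lemma sum_xlogx_ge {w W : V → ℝ} (hw : ∀ x, 0 ≤ w x) (hw1 : ∑ x, w x = 1)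
    (hW : ∀ x, 0 ≤ W x) :
    (∑ x, w x * W x) * Real.log (∑ x, w x * W x) ≤ ∑ x, w x * (W x * Real.log (W x)) := by
  have hterm : ∀ x (_ : x ∈ Finset.univ), 0 ≤ w x * W x :=
    fun x _ => mul_nonneg (hw x) (hW x)
  set S := ∑ x, w x * W x with hS
  have hS0 : 0 ≤ S := Finset.sum_nonneg hterm
  rcases eq_or_lt_of_le hS0 with h0 | hSpos
  · rw [← h0, zero_mul]
    apply Finset.sum_nonneg
    intro x hx
    have hz := (Finset.sum_eq_zero_iff_of_nonneg hterm).1 h0.symm x hx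
    rcases mul_eq_zero.1 hz with h | h
    · simp [h]
    · simp [h]
  · have point : ∀ a : ℝ, 0 ≤ a → a * Real.log S + (a - S) ≤ a * Real.log a := by
      intro a ha
      rcases eq_or_lt_of_le ha with h | h
      · rw [← h]; simp; linarith
      · have h1 : Real.log (S / a) ≤ S / a - 1 :=
          Real.log_le_sub_one_of_pos (div_pos hSpos h)
        rw [Real.log_div hSpos.ne' h.ne'] at h1
        have h2 : a * (Real.log S - Real.log a) ≤ a * (S / a - 1) :=
          mul_le_mul_of_nonneg_left h1 h.le
        have h3 : a * (S / a - 1) = S - a := by field_simp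
        rw [h3] at h2
        nlinarith
    have expand : ∑ x, w x * (W x * Real.log S + (W x - S)) = S * Real.log S := by
      have e1 : ∀ x, w x * (W x * Real.log S + (W x - S))
          = (w x * W x) * Real.log S + w x * W x - w x * S := by intro x; ring
      simp only [e1]
      rw [Finset.sum_sub_distrib, Finset.sum_add_distrib, ← Finset.sum_mul, ← Finset.sum_mul,
        hw1, ← hS]
      ring
    calc S * Real.log S = ∑ x, w x * (W x * Real.log S + (W x - S)) := expand.symm
    _ ≤ ∑ x, w x * (W x * Real.log (W x)) :=
        Finset.sum_le_sum fun x _ => mul_le_mul_of_nonneg_left (point _ (hW x)) (hw x)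

private lemma diamond {ν v : V → ℝ} (hν : ∀ x, 0 ≤ ν x) (hv : ∀ x, 0 ≤ v x)
    (h1 : ∑ x, ν x * v x = 1) {t : ℝ} (ht : 0 ≤ t) :
    (∑ x, v x ^ (1 + t) * ν x)
      - t * ((∑ x, v x ^ (1 + t) * Real.log (v x ^ (1 + t)) * ν x)
          - (∑ x, v x ^ (1 + t) * ν x) * Real.log (∑ x, v x ^ (1 + t) * ν x)) ≤ 1 := by
  have hθ : (0:ℝ) < 1 + t := by linarith
  set M := ∑ x, v x ^ (1 + t) * ν x with hM
  set A := ∑ x, v x ^ (1 + t) * Real.log (v x) * ν x with hA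
  have hM0 : 0 ≤ M :=
    Finset.sum_nonneg fun x _ => mul_nonneg (Real.rpow_nonneg (hv x) _) (hν x)
  have hlogsum : ∑ x, v x ^ (1 + t) * Real.log (v x ^ (1 + t)) * ν x = (1 + t) * A := by
    rw [hA, Finset.mul_sum]
    refine Finset.sum_congr rfl fun x _ => ?_
    rcases eq_or_lt_of_le (hv x) with h | h
    · rw [← h, Real.zero_rpow hθ.ne']; ring
    · rw [Real.log_rpow h]; ring
  have step1 : M * Real.log M ≤ t * A := by
    have key := sum_xlogx_ge (w := fun x => ν x * v x) (W := fun x => v x ^ t)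
      (fun x => mul_nonneg (hν x) (hv x)) h1 (fun x => Real.rpow_nonneg (hv x) _)
    have e1 : ∑ x, (ν x * v x) * v x ^ t = M := by
      rw [hM]
      refine Finset.sum_congr rfl fun x _ => ?_
      rcases eq_or_lt_of_le (hv x) with h | h
      · rw [← h, Real.zero_rpow hθ.ne']; ring
      · rw [Real.rpow_add h, Real.rpow_one]; ring
    have e2 : ∑ x, (ν x * v x) * (v x ^ t * Real.log (v x ^ t)) = t * A := by
      rw [hA, Finset.mul_sum]
      refine Finset.sum_congr rfl fun x _ => ?_
      rcases eq_or_lt_of_le (hv x) with h | h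
      · rw [← h, Real.zero_rpow hθ.ne']; ring
      · rw [Real.log_rpow h, Real.rpow_add h, Real.rpow_one]; ring
    rw [e1, e2] at key
    exact key
  have hMlog := MlogM_le_one hM0
  rw [hlogsum]
  nlinarith [mul_le_mul_of_nonneg_left step1 ht]

end AuxProofs

set_option linter.unusedSectionVars false

section AuxProofs2

variable {V : Type*} [Fintype V] [DecidableEq V]

private lemma jensen_step {K : V → V → ℝ} (hK : IsKernel K) {F : V → ℝ}
    (hF : ∀ y, 0 ≤ F y) {s : ℝ} (hs : 1 ≤ s) (x : V) :
    mulKF K F x ^ s ≤ mulKF K (fun y => F y ^ s) x := by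
  have := Real.rpow_arith_mean_le_arith_mean_rpow Finset.univ (fun y => K x y) F
    (fun y _ => hK.1 x y) (hK.2 x) (fun y _ => hF y) hs
  simpa [mulKF] using this

private lemma entL_eq {ν : V → ℝ} (hν : ∀ x, 0 < ν x) (f : V → ℝ) :
    entL ν f = (∑ x, f x ^ 2 * Real.log (f x ^ 2) * ν x)
      - (∑ x, f x ^ 2 * ν x) * Real.log (∑ x, f x ^ 2 * ν x) := by
  by_cases hz : ∀ x, f x = 0
  · simp [entL, hz]
  · push_neg at hz
    obtain ⟨x0, hx0⟩ := hz
    have hS : 0 < ∑ y, f y ^ 2 * ν y := by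
      have h1 : 0 < f x0 ^ 2 * ν x0 := mul_pos (by positivity) (hν x0)
      exact lt_of_lt_of_le h1 (Finset.single_le_sum (f := fun y => f y ^ 2 * ν y)
        (fun y _ => mul_nonneg (sq_nonneg _) (hν y).le) (Finset.mem_univ x0))
    rw [entL, Finset.sum_mul, ← Finset.sum_sub_distrib]
    refine Finset.sum_congr rfl fun x _ => ?_
    by_cases h : f x = 0
    · simp [h]
    · rw [Real.log_div (pow_ne_zero 2 h) hS.ne']
      ring

private lemma entL_nonneg {ν : V → ℝ} (hν : ∀ x, 0 < ν x) (hν1 : ∑ x, ν x = 1)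
    (f : V → ℝ) : 0 ≤ entL ν f := by
  rw [entL_eq hν]
  have key := sum_xlogx_ge (w := ν) (W := fun x => f x ^ 2)
    (fun x => (hν x).le) hν1 (fun x => sq_nonneg _)
  have e1 : ∑ x, ν x * f x ^ 2 = ∑ x, f x ^ 2 * ν x :=
    Finset.sum_congr rfl fun x _ => mul_comm _ _
  have e2 : ∑ x, ν x * (f x ^ 2 * Real.log (f x ^ 2))
      = ∑ x, f x ^ 2 * Real.log (f x ^ 2) * ν x :=
    Finset.sum_congr rfl fun x _ => by ring
  rw [e1, e2] at key
  linarith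

private lemma dirichlet_nonneg {K : V → V → ℝ} (hK0 : ∀ x y, 0 ≤ K x y) {μ ν : V → ℝ}
    (hμ : ∀ x, 0 ≤ μ x) (hν : ∀ x, 0 < ν x) (φ : V → ℝ) :
    0 ≤ dirichlet (Pker K μ ν) ν φ := by
  rw [dirichlet]
  apply mul_nonneg (by norm_num)
  refine Finset.sum_nonneg fun x _ => Finset.sum_nonneg fun y _ => ?_
  apply mul_nonneg (sq_nonneg _)
  apply mul_nonneg (hν x).le
  rw [Pker]
  apply mul_nonneg (one_div_nonneg.2 (hν x).le)
  exact Finset.sum_nonneg fun z _ =>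
    mul_nonneg (mul_nonneg (hμ z) (hK0 z x)) (hK0 z y)

private lemma quad_identity {K : V → V → ℝ} (hK : IsKernel K) {μ ν : V → ℝ}
    (hν : ∀ x, 0 < ν x) (hμK : mulMK μ K = ν) (φ : V → ℝ) :
    ∑ z, (mulKF K φ z) ^ 2 * μ z
      = ∑ x, φ x ^ 2 * ν x - dirichlet (Pker K μ ν) ν φ := by
  have hP : ∀ x y, ν x * Pker K μ ν x y = ∑ z, μ z * K z x * K z y := by
    intro x y
    rw [Pker, ← mul_assoc, mul_one_div, div_self (hν x).ne', one_mul]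
  have hinner : ∀ z, ∑ x, ∑ y, (φ x - φ y) ^ 2 * (K z x * K z y)
      = 2 * (∑ x, K z x * φ x ^ 2) - 2 * (mulKF K φ z) ^ 2 := by
    intro z
    have hrow := hK.2 z
    have e1 : ∑ x, ∑ y, (K z x * φ x ^ 2) * K z y = ∑ x, K z x * φ x ^ 2 := by
      refine Finset.sum_congr rfl fun x _ => ?_
      rw [← Finset.mul_sum, hrow, mul_one]
    have e2 : ∑ x, ∑ y, (K z x * φ x) * (K z y * φ y)
        = (mulKF K φ z) * (mulKF K φ z) := by
      rw [← Finset.sum_mul_sum]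
      rfl
    have e3 : ∑ x, ∑ y, K z x * (K z y * φ y ^ 2) = ∑ y, K z y * φ y ^ 2 := by
      rw [← Finset.sum_mul_sum, hrow, one_mul]
    calc ∑ x, ∑ y, (φ x - φ y) ^ 2 * (K z x * K z y)
        = ∑ x, ∑ y, ((K z x * φ x ^ 2) * K z y - 2 * ((K z x * φ x) * (K z y * φ y))
            + K z x * (K z y * φ y ^ 2)) := by
          refine Finset.sum_congr rfl fun x _ => Finset.sum_congr rfl fun y _ => by ring
      _ = (∑ x, ∑ y, (K z x * φ x ^ 2) * K z y)
            - 2 * (∑ x, ∑ y, (K z x * φ x) * (K z y * φ y))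
            + (∑ x, ∑ y, K z x * (K z y * φ y ^ 2)) := by
          simp only [Finset.sum_add_distrib, Finset.sum_sub_distrib, ← Finset.mul_sum]
      _ = (∑ x, K z x * φ x ^ 2) - 2 * ((mulKF K φ z) * (mulKF K φ z))
            + (∑ y, K z y * φ y ^ 2) := by rw [e1, e2, e3]
      _ = 2 * (∑ x, K z x * φ x ^ 2) - 2 * (mulKF K φ z) ^ 2 := by
          have : ∑ y, K z y * φ y ^ 2 = ∑ x, K z x * φ x ^ 2 := rfl
          rw [this]; ring
  have hDir : dirichlet (Pker K μ ν) ν φ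
      = (∑ z, μ z * (∑ x, K z x * φ x ^ 2)) - ∑ z, (mulKF K φ z) ^ 2 * μ z := by
    rw [dirichlet]
    have step1 : ∑ x, ∑ y, (φ x - φ y) ^ 2 * (ν x * Pker K μ ν x y)
        = ∑ z, μ z * (∑ x, ∑ y, (φ x - φ y) ^ 2 * (K z x * K z y)) := by
      calc ∑ x, ∑ y, (φ x - φ y) ^ 2 * (ν x * Pker K μ ν x y)
          = ∑ x, ∑ y, ∑ z, μ z * ((φ x - φ y) ^ 2 * (K z x * K z y)) := by
            refine Finset.sum_congr rfl fun x _ => Finset.sum_congr rfl fun y _ => ?_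
            rw [hP, Finset.mul_sum]
            exact Finset.sum_congr rfl fun z _ => by ring
        _ = ∑ x, ∑ z, ∑ y, μ z * ((φ x - φ y) ^ 2 * (K z x * K z y)) := by
            exact Finset.sum_congr rfl fun x _ => Finset.sum_comm
        _ = ∑ z, ∑ x, ∑ y, μ z * ((φ x - φ y) ^ 2 * (K z x * K z y)) := Finset.sum_comm
        _ = ∑ z, μ z * (∑ x, ∑ y, (φ x - φ y) ^ 2 * (K z x * K z y)) := by
            refine Finset.sum_congr rfl fun z _ => ?_
            rw [Finset.mul_sum]
            exact Finset.sum_congr rfl fun x _ => by rw [Finset.mul_sum]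
    rw [step1]
    have step2 : ∀ z, μ z * (∑ x, ∑ y, (φ x - φ y) ^ 2 * (K z x * K z y))
        = μ z * (2 * (∑ x, K z x * φ x ^ 2) - 2 * (mulKF K φ z) ^ 2) := by
      intro z; rw [hinner z]
    simp only [step2]
    rw [Finset.mul_sum, ← Finset.sum_sub_distrib]
    refine Finset.sum_congr rfl fun z _ => by ring
  have hswap : ∑ z, μ z * (∑ x, K z x * φ x ^ 2) = ∑ x, φ x ^ 2 * ν x := by
    simp only [Finset.mul_sum]
    rw [Finset.sum_comm]
    refine Finset.sum_congr rfl fun x _ => ?_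
    rw [← hμK]
    show ∑ z, μ z * (K z x * φ x ^ 2) = φ x ^ 2 * ∑ z, μ z * K z x
    rw [Finset.mul_sum]
    exact Finset.sum_congr rfl fun z _ => by ring
  rw [hDir, hswap]
  ring

private lemma lsConst_nonneg {K : V → V → ℝ} (hK0 : ∀ x y, 0 ≤ K x y) {μ ν : V → ℝ}
    (hμ : ∀ x, 0 ≤ μ x) (hν : ∀ x, 0 < ν x) (hν1 : ∑ x, ν x = 1) :
    0 ≤ lsConst (Pker K μ ν) ν := by
  apply Real.sInf_nonneg
  rintro r ⟨f, hf, rfl⟩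
  exact div_nonneg (dirichlet_nonneg hK0 hμ hν f)
    (entL_nonneg hν hν1 f)

private lemma lsConst_mul_entL_le {K : V → V → ℝ} (hK0 : ∀ x y, 0 ≤ K x y) {μ ν : V → ℝ}
    (hμ : ∀ x, 0 ≤ μ x) (hν : ∀ x, 0 < ν x) (hν1 : ∑ x, ν x = 1) (φ : V → ℝ) :
    lsConst (Pker K μ ν) ν * entL ν φ ≤ dirichlet (Pker K μ ν) ν φ := by
  by_cases h : entL ν φ = 0
  · rw [h, mul_zero]; exact dirichlet_nonneg hK0 hμ hν φ
  · have hE : 0 < entL ν φ := lt_of_le_of_ne (entL_nonneg hν hν1 φ) (Ne.symm h)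
    have hbdd : BddBelow {r : ℝ | ∃ f : V → ℝ, entL ν f ≠ 0 ∧
        r = dirichlet (Pker K μ ν) ν f / entL ν f} := by
      refine ⟨0, ?_⟩
      rintro r ⟨f, hf, rfl⟩
      exact div_nonneg (dirichlet_nonneg hK0 hμ hν f) (entL_nonneg hν hν1 f)
    have hmem : dirichlet (Pker K μ ν) ν φ / entL ν φ ∈ {r : ℝ | ∃ f : V → ℝ,
        entL ν f ≠ 0 ∧ r = dirichlet (Pker K μ ν) ν f / entL ν f} := ⟨φ, h, rfl⟩
    have hle : lsConst (Pker K μ ν) ν ≤ dirichlet (Pker K μ ν) ν φ / entL ν φ :=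
      csInf_le hbdd hmem
    calc lsConst (Pker K μ ν) ν * entL ν φ
        ≤ (dirichlet (Pker K μ ν) ν φ / entL ν φ) * entL ν φ :=
          mul_le_mul_of_nonneg_right hle hE.le
      _ = dirichlet (Pker K μ ν) ν φ := div_mul_cancel₀ _ hE.ne'

end AuxProofs2

section AuxProofs3

variable {V : Type*} [Fintype V] [DecidableEq V]

private lemma sum_le_one_of_lpNorm {ν : V → ℝ} {p : ℝ} (hp : 0 < p) {f : V → ℝ}
    (hν : ∀ x, 0 ≤ ν x) (h : lpNorm ν p f ≤ 1) : ∑ x, |f x| ^ p * ν x ≤ 1 := by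
  by_contra hc
  push_neg at hc
  have h2 : (1:ℝ) ^ (1/p) < (∑ x, |f x| ^ p * ν x) ^ (1/p) :=
    Real.rpow_lt_rpow (by norm_num) hc (by positivity)
  rw [Real.one_rpow] at h2
  rw [lpNorm] at h
  linarith

private lemma step_lemma {K : V → V → ℝ} (hK : IsKernel K) {μ ν : V → ℝ}
    (hμ : ∀ x, 0 < μ x) (hν : ∀ x, 0 < ν x) (hν1 : ∑ x, ν x = 1)
    (hμK : mulMK μ K = ν) {p r : ℝ} (hp : 2 ≤ p) (hpr : p ≤ r)
    (hr : r ≤ (1 + lsConst (Pker K μ ν) ν) * p) {f : V → ℝ}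
    (hf : lpNorm ν p f ≤ 1) : lpNorm μ r (mulKF K f) ≤ 1 := by
  have hp0 : 0 < p := by linarith
  have hr0 : 0 < r := by linarith
  set l := lsConst (Pker K μ ν) ν with hl
  have hsum : ∑ x, |f x| ^ p * ν x ≤ 1 :=
    sum_le_one_of_lpNorm hp0 (fun x => (hν x).le) hf
  -- the normalized core inequality
  have core : ∀ G : V → ℝ, (∀ y, 0 ≤ G y) → ∑ x, G x ^ p * ν x = 1 →
      ∑ x, (mulKF K G x) ^ r * μ x ≤ 1 := by
    intro G hG hG1
    set φ := fun y => G y ^ (r/2) with hφ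
    have hφ0 : ∀ y, 0 ≤ φ y := fun y => Real.rpow_nonneg (hG y) _
    set t := r / p - 1 with hts
    have ht0 : 0 ≤ t := by
      have h1 : 1 ≤ r / p := (one_le_div hp0).2 hpr
      rw [hts]; linarith
    have htl : t ≤ l := by
      have h1 : r / p ≤ 1 + l := (div_le_iff₀ hp0).2 (by linarith)
      rw [hts]; linarith
    have hKG : ∀ x, 0 ≤ mulKF K G x :=
      fun x => Finset.sum_nonneg fun y _ => mul_nonneg (hK.1 x y) (hG y)
    have point : ∀ x, mulKF K G x ^ r ≤ (mulKF K φ x) ^ 2 := by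
      intro x
      have hj := jensen_step hK hG (by linarith : 1 ≤ r/2) x
      have e : mulKF K G x ^ r = (mulKF K G x ^ (r/2)) ^ (2:ℕ) := by
        rw [← Real.rpow_natCast (mulKF K G x ^ (r/2)) 2, ← Real.rpow_mul (hKG x)]
        norm_num
      rw [e]
      exact pow_le_pow_left₀ (Real.rpow_nonneg (hKG x) _) hj 2
    have s1 : ∑ x, mulKF K G x ^ r * μ x ≤ ∑ x, (mulKF K φ x) ^ 2 * μ x :=
      Finset.sum_le_sum fun x _ => mul_le_mul_of_nonneg_right (point x) (hμ x).le
    have s2 := quad_identity hK hν hμK φ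
    have s3 : l * entL ν φ ≤ dirichlet (Pker K μ ν) ν φ :=
      lsConst_mul_entL_le hK.1 (fun x => (hμ x).le) hν hν1 φ
    have hentnn : 0 ≤ entL ν φ := entL_nonneg hν hν1 φ
    -- diamond with v = G^p
    have hv : ∀ y, 0 ≤ G y ^ p := fun y => Real.rpow_nonneg (hG y) _
    have h1' : ∑ x, ν x * G x ^ p = 1 := by
      rw [← hG1]; exact Finset.sum_congr rfl fun x _ => mul_comm _ _
    have hd := diamond (fun x => (hν x).le) hv h1' ht0
    have hvφ : ∀ x, (G x ^ p) ^ (1 + t) = φ x ^ 2 := by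
      intro x
      rw [hφ]
      show (G x ^ p) ^ (1 + t) = (G x ^ (r/2)) ^ (2:ℕ)
      rw [← Real.rpow_natCast (G x ^ (r/2)) 2, ← Real.rpow_mul (hG x),
        ← Real.rpow_mul (hG x)]
      congr 1
      rw [hts]
      field_simp
      push_cast; ring
    simp only [hvφ] at hd
    have hdent : (∑ x, φ x ^ 2 * ν x) - t * entL ν φ ≤ 1 := by
      rw [entL_eq hν φ]
      exact hd
    have hmul : t * entL ν φ ≤ l * entL ν φ := mul_le_mul_of_nonneg_right htl hentnn
    linarith
  -- reduce the general case to the core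
  set F := fun y => |f y| with hF
  have hFnn : ∀ y, 0 ≤ F y := fun y => abs_nonneg _
  have habs : ∀ x, |mulKF K f x| ≤ mulKF K F x := by
    intro x
    rw [mulKF, mulKF]
    refine (Finset.abs_sum_le_sum_abs _ _).trans ?_
    refine Finset.sum_le_sum fun y _ => ?_
    rw [abs_mul, abs_of_nonneg (hK.1 x y)]
  have hgoal : ∑ x, |mulKF K f x| ^ r * μ x ≤ 1 → lpNorm μ r (mulKF K f) ≤ 1 := by
    intro h
    rw [lpNorm]
    exact Real.rpow_le_one (Finset.sum_nonneg fun x _ =>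
      mul_nonneg (Real.rpow_nonneg (abs_nonneg _) _) (hμ x).le) h (by positivity)
  apply hgoal
  set c := ∑ x, F x ^ p * ν x with hc
  have hc0 : 0 ≤ c :=
    Finset.sum_nonneg fun x _ => mul_nonneg (Real.rpow_nonneg (hFnn x) _) (hν x).le
  rcases eq_or_lt_of_le hc0 with h0 | hcpos
  · -- c = 0 : f ≡ 0
    have hF0 : ∀ y, F y = 0 := by
      intro y
      have hterm := (Finset.sum_eq_zero_iff_of_nonneg (fun x (_ : x ∈ Finset.univ) =>
        mul_nonneg (Real.rpow_nonneg (hFnn x) p) (hν x).le)).1 h0.symm y (Finset.mem_univ y)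
      have h2 : F y ^ p = 0 := by
        rcases mul_eq_zero.1 hterm with h | h
        · exact h
        · exact absurd h (hν y).ne'
      by_contra hy
      have hFy : 0 < F y := lt_of_le_of_ne (hFnn y) (Ne.symm hy)
      exact absurd h2 (Real.rpow_pos_of_pos hFy p).ne'
    have hzero : ∀ x, mulKF K f x = 0 := by
      intro x
      have h1 := habs x
      have h2 : mulKF K F x = 0 := by
        rw [mulKF]
        refine Finset.sum_eq_zero fun y _ => ?_
        rw [hF0 y, mul_zero]
      rw [h2] at h1
      exact abs_eq_zero.1 (le_antisymm h1 (abs_nonneg _))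
    have : ∀ x, |mulKF K f x| ^ r * μ x = 0 := by
      intro x
      rw [hzero x, abs_zero, Real.zero_rpow hr0.ne', zero_mul]
    rw [Finset.sum_congr rfl fun x _ => this x]
    simp
  · -- c > 0 : rescale
    set k := c ^ (1/p) with hk
    have hkpos : 0 < k := Real.rpow_pos_of_pos hcpos _
    have hkle1 : k ≤ 1 := Real.rpow_le_one hc0 hsum (by positivity)
    set G := fun y => F y / k with hG
    have hGnn : ∀ y, 0 ≤ G y := fun y => div_nonneg (hFnn y) hkpos.le
    have hkp : k ^ p = c := by
      rw [hk, one_div, Real.rpow_inv_rpow hc0 hp0.ne']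
    have hGsum : ∑ x, G x ^ p * ν x = 1 := by
      have e1 : ∀ x, G x ^ p * ν x = (F x ^ p * ν x) / c := by
        intro x
        rw [hG]
        show (F x / k) ^ p * ν x = F x ^ p * ν x / c
        rw [Real.div_rpow (hFnn x) hkpos.le, hkp]
        ring
      rw [Finset.sum_congr rfl fun x _ => e1 x, ← Finset.sum_div, ← hc,
        div_self hcpos.ne']
    have hcore := core G hGnn hGsum
    have hFG : ∀ y, F y ≤ G y := by
      intro y
      rw [hG]
      show F y ≤ F y / k
      rw [le_div_iff₀ hkpos]
      calc F y * k ≤ F y * 1 := mul_le_mul_of_nonneg_left hkle1 (hFnn y)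
        _ = F y := mul_one _
    have hmono : ∀ x, mulKF K F x ≤ mulKF K G x :=
      fun x => Finset.sum_le_sum fun y _ => mul_le_mul_of_nonneg_left (hFG y) (hK.1 x y)
    calc ∑ x, |mulKF K f x| ^ r * μ x
        ≤ ∑ x, (mulKF K G x) ^ r * μ x := by
          refine Finset.sum_le_sum fun x _ => mul_le_mul_of_nonneg_right ?_ (hμ x).le
          exact Real.rpow_le_rpow (abs_nonneg _) ((habs x).trans (hmono x)) hr0.le
      _ ≤ 1 := hcore

end AuxProofs3

section AuxProofs4

variable {V : Type*} [Fintype V] [DecidableEq V]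

private lemma muSeq_sum {K : ℕ → V → V → ℝ} {μ0 : V → ℝ}
    (hK : ∀ i, 1 ≤ i → IsKernel (K i)) (hμ01 : ∑ x, μ0 x = 1) :
    ∀ n, ∑ x, muSeq μ0 K n x = 1 := by
  intro n
  induction n with
  | zero => exact hμ01
  | succ n ih =>
    have hker := hK (n+1) (by omega)
    calc ∑ y, muSeq μ0 K (n+1) y
        = ∑ y, ∑ x, muSeq μ0 K n x * K (n+1) x y := rfl
      _ = ∑ x, ∑ y, muSeq μ0 K n x * K (n+1) x y := Finset.sum_comm
      _ = ∑ x, muSeq μ0 K n x * (∑ y, K (n+1) x y) := by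
          exact Finset.sum_congr rfl fun x _ => (Finset.mul_sum _ _ _).symm
      _ = ∑ x, muSeq μ0 K n x := by
          refine Finset.sum_congr rfl fun x _ => ?_
          rw [hker.2 x, mul_one]
      _ = 1 := ih

private lemma Kseg_zero_succ (K : ℕ → V → V → ℝ) (n : ℕ) :
    Kseg K 0 (n+1) = mulKK (Kseg K 0 n) (K (n+1)) := by
  show (if n + 1 ≤ 0 then idK else mulKK (Kseg K 0 n) (K (n+1))) = _
  rw [if_neg (by omega)]

private lemma mulKF_idK (f : V → ℝ) : mulKF (idK : V → V → ℝ) f = f := by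
  funext x
  rw [mulKF]
  show ∑ y, (if x = y then (1:ℝ) else 0) * f y = f x
  rw [Finset.sum_congr rfl fun y (_ : y ∈ Finset.univ) => ite_mul (x = y) 1 0 (f y)]
  simp

private lemma mulKF_mulKK (A B : V → V → ℝ) (f : V → ℝ) :
    mulKF (mulKK A B) f = mulKF A (mulKF B f) := by
  funext x
  simp only [mulKF, mulKK, Finset.sum_mul, Finset.mul_sum]
  rw [Finset.sum_comm]
  exact Finset.sum_congr rfl fun z _ => Finset.sum_congr rfl fun y _ => by ring

private lemma main_aux (K : ℕ → V → V → ℝ) (μ0 : V → ℝ)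
    (hK : ∀ i, 1 ≤ i → IsKernel (K i)) (hμ01 : ∑ x, μ0 x = 1)
    (hpos : ∀ n x, 0 < muSeq μ0 K n x) :
    ∀ n : ℕ, ∀ q0 q : ℝ, 2 ≤ q0 → q0 ≤ q →
      q ≤ (∏ i ∈ Finset.Icc 1 n,
            (1 + lsConst (Pker (K i) (muSeq μ0 K (i - 1)) (muSeq μ0 K i)) (muSeq μ0 K i))) * q0 →
      ∀ f : V → ℝ, lpNorm (muSeq μ0 K n) q0 f ≤ 1 →
        lpNorm μ0 q (mulKF (Kseg K 0 n) f) ≤ 1 := by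
  intro n
  induction n with
  | zero =>
    intro q0 q h2 hq0q hqle f hf
    have hq : q = q0 := by
      refine le_antisymm ?_ hq0q
      simpa using hqle
    have : Kseg K 0 0 = (idK : V → V → ℝ) := rfl
    rw [this, mulKF_idK, hq]
    exact hf
  | succ n ih =>
    intro q0 q h2 hq0q hqle f hf
    have hq0pos : (0:ℝ) < q0 := by linarith
    set ls : ℕ → ℝ := fun i =>
      lsConst (Pker (K i) (muSeq μ0 K (i - 1)) (muSeq μ0 K i)) (muSeq μ0 K i) with hls
    have hlnn : ∀ i, 1 ≤ i → 0 ≤ ls i := by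
      intro i hi
      apply lsConst_nonneg (hK i hi).1 (fun x => (hpos (i-1) x).le) (hpos i)
        (muSeq_sum hK hμ01 i)
    have hprod_n : (1:ℝ) ≤ ∏ i ∈ Finset.Icc 1 n, (1 + ls i) := by
      calc (1:ℝ) = ∏ _i ∈ Finset.Icc 1 n, (1:ℝ) := Finset.prod_const_one.symm
      _ ≤ ∏ i ∈ Finset.Icc 1 n, (1 + ls i) := by
          refine Finset.prod_le_prod (fun i _ => by norm_num) (fun i hi => ?_)
          have h0 := hlnn i (Finset.mem_Icc.1 hi).1
          linarith
    have hl : ls (n+1)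
        = lsConst (Pker (K (n+1)) (muSeq μ0 K n) (muSeq μ0 K (n+1))) (muSeq μ0 K (n+1)) := rfl
    have hlnn1 : 0 ≤ ls (n+1) := hlnn (n+1) (by omega)
    have hprodsucc : (∏ i ∈ Finset.Icc 1 (n+1), (1 + ls i))
        = (∏ i ∈ Finset.Icc 1 n, (1 + ls i)) * (1 + ls (n+1)) :=
      Finset.prod_Icc_succ_top (by omega) _
    set q1 := min q ((1 + ls (n+1)) * q0) with hq1
    have hq0q1 : q0 ≤ q1 :=
      le_min hq0q (le_mul_of_one_le_left hq0pos.le (by linarith))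
    have h2q1 : 2 ≤ q1 := le_trans h2 hq0q1
    have hstep : lpNorm (muSeq μ0 K n) q1 (mulKF (K (n+1)) f) ≤ 1 := by
      refine step_lemma (hK (n+1) (by omega)) (hpos n) (hpos (n+1))
        (muSeq_sum hK hμ01 (n+1)) rfl h2 hq0q1 ?_ hf
      rw [← hl]
      exact min_le_right _ _
    have hq1q : q1 ≤ q := min_le_left _ _
    have hih : q ≤ (∏ i ∈ Finset.Icc 1 n, (1 + ls i)) * q1 := by
      rcases le_total q ((1 + ls (n+1)) * q0) with h | h
      · rw [hq1, min_eq_left h]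
        exact le_mul_of_one_le_left (by linarith) hprod_n
      · rw [hq1, min_eq_right h]
        rw [hprodsucc, mul_assoc] at hqle
        exact hqle
    have hfin := ih q1 q h2q1 hq1q hih (mulKF (K (n+1)) f) hstep
    rw [Kseg_zero_succ, mulKF_mulKK]
    exact hfin

end AuxProofs4


/-- Corollary 4.4 of the paper: iterated hypercontractivity. If
`l(P_i)` is the log-Sobolev constant of `P_i = K_i^* K_i` with respect to `μ_i`,
then for `2 ≤ q₀` and `q₀ ≤ q ≤ (∏_{i=1}^n (1+l(P_i))) q₀`, the operator
`K_{0,n} : ℓ^{q₀}(μ_n) → ℓ^q(μ_0)` has norm at most 1. -/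
theorem stmt13 {V : Type*} [Fintype V] [DecidableEq V]
    (K : ℕ → V → V → ℝ) (μ0 : V → ℝ)
    (hK : ∀ i, 1 ≤ i → IsKernel (K i))
    (hμ0pos : ∀ x, 0 < μ0 x) (hμ01 : ∑ x, μ0 x = 1)
    (hpos : ∀ n x, 0 < muSeq μ0 K n x) :
    ∀ n : ℕ, 1 ≤ n → ∀ q0 q : ℝ, 2 ≤ q0 → q0 ≤ q →
      q ≤ (∏ i ∈ Finset.Icc 1 n,
            (1 + lsConst (Pker (K i) (muSeq μ0 K (i - 1)) (muSeq μ0 K i)) (muSeq μ0 K i))) * q0 →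
      ∀ f : V → ℝ, lpNorm (muSeq μ0 K n) q0 f ≤ 1 →
        lpNorm μ0 q (mulKF (Kseg K 0 n) f) ≤ 1 := by
  intro n _ q0 q h2 hq0q hqle f hf
  exact main_aux K μ0 hK hμ01 hpos n q0 q h2 hq0q hqle f hf

end TimeInhomog
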